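/- Pointwise control of the ⟨ct−r⟩-weighted derivative by the full (Lorentz) vector fields (Lemma 6.11): Fix c > 0. There is a constant C > 0 (depending only on c) such that for every smooth function U on a neighborhood of a point (t,x) with t ≥ 0 and x ≠ 0, writing r = |x|, and for every ∂ ∈ {∂_t, ∂_1, ∂_2}: |(c t − r) ∂U(t,x)| ≤ C ( |SU(t,x)| + |ΩU(t,x)| + |L_1 U(t,x)| + |L_2 U(t,x)| + |∂_t U(t,x)| + |∂_1 U(t,x)| + |∂_2 U(t,x)| ), where S = t∂_t + r∂_r, Ω = x_2∂_1 − x_1∂_2, and L_i = c t ∂_i + (x_i/c) ∂_t for i = 1,2. -/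

import Mathlib

open MeasureTheory

noncomputable section

namespace Paper

/-- Two-dimensional Euclidean space. -/
abbrev Pt2 := EuclideanSpace ℝ (Fin 2)

/-- Time derivative ∂_t. -/
def tD (φ : ℝ → Pt2 → ℝ) : ℝ → Pt2 → ℝ := fun t x => deriv (fun s => φ s x) t

/-- Spatial derivative ∂_i (i = 1,2). -/
def xD (i : Fin 2) (φ : ℝ → Pt2 → ℝ) : ℝ → Pt2 → ℝ :=
  fun t x => fderiv ℝ (fun y => φ t y) x (EuclideanSpace.single i 1)

/-- First-order space-time derivatives: ∂_0 = ∂_t, ∂_1, ∂_2. -/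
def pD : Fin 3 → (ℝ → Pt2 → ℝ) → ℝ → Pt2 → ℝ := ![tD, xD 0, xD 1]

/-- Scaling field S = t∂_t + r∂_r = t∂_t + x·∇. -/
def sD (φ : ℝ → Pt2 → ℝ) : ℝ → Pt2 → ℝ :=
  fun t x => t * tD φ t x + x 0 * xD 0 φ t x + x 1 * xD 1 φ t x

/-- Rotation field Ω = x₂∂₁ − x₁∂₂. -/
def oD (φ : ℝ → Pt2 → ℝ) : ℝ → Pt2 → ℝ :=
  fun t x => x 1 * xD 0 φ t x - x 0 * xD 1 φ t x

/-- Radial derivative ∂_r = (x/r)·∇. -/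
def rD (φ : ℝ → Pt2 → ℝ) : ℝ → Pt2 → ℝ :=
  fun t x => (x 0 * xD 0 φ t x + x 1 * xD 1 φ t x) / ‖x‖

/-- The five admissible vector fields Γ ∈ {∂_t, ∂_1, ∂_2, S, Ω}. -/
inductive VF : Type
  | t | x1 | x2 | s | om
  deriving DecidableEq

instance : Fintype VF where
  elems := {VF.t, VF.x1, VF.x2, VF.s, VF.om}
  complete := fun x => by cases x <;> decide

/-- Action of a vector field Γ on a function. -/
def VF.apply : VF → (ℝ → Pt2 → ℝ) → ℝ → Pt2 → ℝ
  | .t => tD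
  | .x1 => xD 0
  | .x2 => xD 1
  | .s => sD
  | .om => oD

/-- Iterated vector fields Γ^α for a word α. -/
def GammaIter : List VF → (ℝ → Pt2 → ℝ) → ℝ → Pt2 → ℝ
  | [], φ => φ
  | v :: l, φ => v.apply (GammaIter l φ)

/-- Γ^α for a multi-index α of length k. -/
def GammaW {k : ℕ} (α : Fin k → VF) (φ : ℝ → Pt2 → ℝ) : ℝ → Pt2 → ℝ :=
  GammaIter (List.ofFn α) φ

/-- Japanese bracket ⟨s⟩ = (1 + s²)^{1/2}. -/
def jb (s : ℝ) : ℝ := Real.sqrt (1 + s ^ 2)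

/-- Spatial L² norm. -/
def L2 (f : Pt2 → ℝ) : ℝ := Real.sqrt (∫ x : Pt2, (f x) ^ 2)

/-- κ-th order generalized energy E_κ(φ)(t). -/
def Ek (κ : ℕ) (φ : ℝ → Pt2 → ℝ) (t : ℝ) : ℝ :=
  (1/2) * ∑ k ∈ Finset.range κ, ∑ α : Fin k → VF,
    ∫ x : Pt2, ((tD (GammaW α φ) t x) ^ 2 + (xD 0 (GammaW α φ) t x) ^ 2
      + (xD 1 (GammaW α φ) t x) ^ 2)

/-- The d'Alembertian □φ = ∂_t²φ − Δφ. -/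
def waveOp (φ : ℝ → Pt2 → ℝ) : ℝ → Pt2 → ℝ :=
  fun t x => tD (tD φ) t x - (xD 0 (xD 0 φ) t x + xD 1 (xD 1 φ) t x)

/-- The Lorentz boosts L_i = c t ∂_i + (x_i/c) ∂_t, i = 1,2. -/
def Lb (c : ℝ) (i : Fin 2) (U : ℝ → Pt2 → ℝ) : ℝ → Pt2 → ℝ :=
  fun t x => c * t * xD i U t x + (x i / c) * tD U t x

/-- U is smooth on a neighborhood of the point (t,x). -/
def SmoothNear (u : ℝ → Pt2 → ℝ) (t : ℝ) (x : Pt2) : Prop :=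
  ∃ s ∈ nhds ((t, x) : ℝ × Pt2), ContDiffOn ℝ (⊤ : ℕ∞) (fun p : ℝ × Pt2 => u p.1 p.2) s

private lemma div_bound' {A y B : ℝ} (hA : 0 < A) (h : |A * y| ≤ A * B) : |y| ≤ B := by
  rw [abs_mul, abs_of_pos hA] at h
  exact le_of_mul_le_mul_left h hA

private lemma mul_abs_bound {a b M : ℝ} (h : |a| ≤ M) : |a * b| ≤ M * |b| := by
  rw [abs_mul]; exact mul_le_mul_of_nonneg_right h (abs_nonneg b)

private lemma main_alg (c t r X0 X1 T D0 D1 S O L0 L1 : ℝ) (hc : 0 < c) (ht : 0 ≤ t)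
    (hr : 0 < r) (hr2 : r ^ 2 = X0 ^ 2 + X1 ^ 2)
    (hS : S = t * T + X0 * D0 + X1 * D1) (hO : O = X1 * D0 - X0 * D1)
    (hL0 : c * L0 = c ^ 2 * t * D0 + X0 * T) (hL1 : c * L1 = c ^ 2 * t * D1 + X1 * T) :
    |(c * t - r) * T| ≤ (c + 1) * (|S| + |O| + |L0| + |L1| + |T| + |D0| + |D1|) ∧
    |(c * t - r) * D0| ≤ (c + 1) * (|S| + |O| + |L0| + |L1| + |T| + |D0| + |D1|) ∧
    |(c * t - r) * D1| ≤ (c + 1) * (|S| + |O| + |L0| + |L1| + |T| + |D0| + |D1|) := by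
  have hct : 0 ≤ c * t := mul_nonneg hc.le ht
  have hA : 0 < c * t + r := by linarith
  have hx0 : |X0| ≤ r := by
    have h : X0 ^ 2 ≤ r ^ 2 := by nlinarith [sq_nonneg X1]
    calc |X0| = Real.sqrt (X0 ^ 2) := (Real.sqrt_sq_eq_abs _).symm
      _ ≤ Real.sqrt (r ^ 2) := Real.sqrt_le_sqrt h
      _ = r := Real.sqrt_sq hr.le
  have hx1 : |X1| ≤ r := by
    have h : X1 ^ 2 ≤ r ^ 2 := by nlinarith [sq_nonneg X0]
    calc |X1| = Real.sqrt (X1 ^ 2) := (Real.sqrt_sq_eq_abs _).symm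
      _ ≤ Real.sqrt (r ^ 2) := Real.sqrt_le_sqrt h
      _ = r := Real.sqrt_sq hr.le
  refine ⟨?_, ?_, ?_⟩
  · apply div_bound' hA
    have hid : (c * t + r) * ((c * t - r) * T)
        = (c ^ 2 * t) * S + (-(X0 * c)) * L0 + (-(X1 * c)) * L1 := by
      rw [hS]
      linear_combination X0 * hL0 + X1 * hL1 + (-T) * hr2
    rw [hid]
    calc |(c ^ 2 * t) * S + (-(X0 * c)) * L0 + (-(X1 * c)) * L1|
        ≤ |(c ^ 2 * t) * S| + |(-(X0 * c)) * L0| + |(-(X1 * c)) * L1| := abs_add_three _ _ _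
      _ ≤ ((c * t + r) * c) * |S| + ((c * t + r) * c) * |L0| + ((c * t + r) * c) * |L1| := by
          refine add_le_add (add_le_add (mul_abs_bound ?_) (mul_abs_bound ?_)) (mul_abs_bound ?_)
          · rw [abs_of_nonneg (by positivity)]; nlinarith
          · rw [abs_neg, abs_mul, abs_of_pos hc]; nlinarith
          · rw [abs_neg, abs_mul, abs_of_pos hc]; nlinarith
      _ = (c * t + r) * (c * |S| + c * |L0| + c * |L1|) := by ring
      _ ≤ (c * t + r) * ((c + 1) * (|S| + |O| + |L0| + |L1| + |T| + |D0| + |D1|)) := by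
          refine mul_le_mul_of_nonneg_left ?_ hA.le
          nlinarith [abs_nonneg S, abs_nonneg O, abs_nonneg L0, abs_nonneg L1,
            abs_nonneg T, abs_nonneg D0, abs_nonneg D1]
  · apply div_bound' hA
    have hid : (c * t + r) * ((c * t - r) * D0)
        = (-X0) * S + (-X1) * O + (c * t) * L0 := by
      rw [hS, hO]
      linear_combination (-t) * hL0 + (-D0) * hr2
    rw [hid]
    calc |(-X0) * S + (-X1) * O + (c * t) * L0|
        ≤ |(-X0) * S| + |(-X1) * O| + |(c * t) * L0| := abs_add_three _ _ _
      _ ≤ (c * t + r) * |S| + (c * t + r) * |O| + (c * t + r) * |L0| := by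
          refine add_le_add (add_le_add (mul_abs_bound ?_) (mul_abs_bound ?_)) (mul_abs_bound ?_)
          · rw [abs_neg]; linarith
          · rw [abs_neg]; linarith
          · rw [abs_of_nonneg hct]; linarith
      _ = (c * t + r) * (|S| + |O| + |L0|) := by ring
      _ ≤ (c * t + r) * ((c + 1) * (|S| + |O| + |L0| + |L1| + |T| + |D0| + |D1|)) := by
          refine mul_le_mul_of_nonneg_left ?_ hA.le
          nlinarith [abs_nonneg S, abs_nonneg O, abs_nonneg L0, abs_nonneg L1,
            abs_nonneg T, abs_nonneg D0, abs_nonneg D1]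
  · apply div_bound' hA
    have hid : (c * t + r) * ((c * t - r) * D1)
        = (-X1) * S + X0 * O + (c * t) * L1 := by
      rw [hS, hO]
      linear_combination (-t) * hL1 + (-D1) * hr2
    rw [hid]
    calc |(-X1) * S + X0 * O + (c * t) * L1|
        ≤ |(-X1) * S| + |X0 * O| + |(c * t) * L1| := abs_add_three _ _ _
      _ ≤ (c * t + r) * |S| + (c * t + r) * |O| + (c * t + r) * |L1| := by
          refine add_le_add (add_le_add (mul_abs_bound ?_) (mul_abs_bound ?_)) (mul_abs_bound ?_)
          · rw [abs_neg]; linarith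
          · linarith
          · rw [abs_of_nonneg hct]; linarith
      _ = (c * t + r) * (|S| + |O| + |L1|) := by ring
      _ ≤ (c * t + r) * ((c + 1) * (|S| + |O| + |L0| + |L1| + |T| + |D0| + |D1|)) := by
          refine mul_le_mul_of_nonneg_left ?_ hA.le
          nlinarith [abs_nonneg S, abs_nonneg O, abs_nonneg L0, abs_nonneg L1,
            abs_nonneg T, abs_nonneg D0, abs_nonneg D1]

/-- Lemma 6.11: pointwise control of the ⟨ct−r⟩-weighted first derivative by
  the full set of (Lorentz) vector fields. -/
theorem weighted_derivative_by_lorentz_fields (c : ℝ) (hc : 0 < c) :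
    ∃ C : ℝ, 0 < C ∧ ∀ (t : ℝ) (x : Pt2) (U : ℝ → Pt2 → ℝ),
      0 ≤ t → x ≠ 0 → SmoothNear U t x →
      ∀ d : Fin 3,
        |(c * t - ‖x‖) * pD d U t x| ≤
          C * (|sD U t x| + |oD U t x| + |Lb c 0 U t x| + |Lb c 1 U t x|
            + |tD U t x| + |xD 0 U t x| + |xD 1 U t x|) := by
  refine ⟨c + 1, by linarith, ?_⟩
  intro t x U ht hx _ d
  have hc' : c ≠ 0 := ne_of_gt hc
  have hr : 0 < ‖x‖ := norm_pos_iff.mpr hx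
  have hr2 : ‖x‖ ^ 2 = x 0 ^ 2 + x 1 ^ 2 := by
    rw [EuclideanSpace.norm_eq, Real.sq_sqrt (by positivity)]
    simp [Fin.sum_univ_two, sq_abs]
  have hS : sD U t x = t * tD U t x + x 0 * xD 0 U t x + x 1 * xD 1 U t x := rfl
  have hO : oD U t x = x 1 * xD 0 U t x - x 0 * xD 1 U t x := rfl
  have hL0 : c * Lb c 0 U t x = c ^ 2 * t * xD 0 U t x + x 0 * tD U t x := by
    show c * (c * t * xD 0 U t x + (x 0 / c) * tD U t x) = _
    field_simp
  have hL1 : c * Lb c 1 U t x = c ^ 2 * t * xD 1 U t x + x 1 * tD U t x := by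
    show c * (c * t * xD 1 U t x + (x 1 / c) * tD U t x) = _
    field_simp
  have key := main_alg c t (‖x‖) (x 0) (x 1) (tD U t x) (xD 0 U t x) (xD 1 U t x)
    (sD U t x) (oD U t x) (Lb c 0 U t x) (Lb c 1 U t x) hc ht hr hr2 hS hO hL0 hL1
  fin_cases d
  · exact key.1
  · exact key.2.1
  · exact key.2.2

end Paper
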